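/- Let A be an indecomposable GCM of finite type. Then for every Z ∈ T_{ℝ,reg} there is a unique element w ∈ W such that (w·Z)(α_i) < 0 for all i = 1,…,n. -/

import Mathlib

open scoped BigOperators

noncomputable section

namespace KacMoodyStab

variable {ι : Type*} [Fintype ι] [DecidableEq ι]

/-- A symmetric generalized Cartan matrix: symmetric, `2` on the diagonal,
non-positive integers off the diagonal. -/
def IsGCM (A : Matrix ι ι ℤ) : Prop :=
  A.IsSymm ∧ (∀ i, A i i = 2) ∧ ∀ i j, i ≠ j → A i j ≤ 0

/-- The simple root `α i` in the root lattice `L = ι → ℤ`. -/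
def sroot (i : ι) : ι → ℤ := Pi.single i 1

/-- The symmetric bilinear form `(x, y) = ∑ i j, x i * A i j * y j` on the root lattice. -/
def bform (A : Matrix ι ι ℤ) (x y : ι → ℤ) : ℤ := ∑ i, ∑ j, x i * A i j * y j

/-- The linear functional `λ ↦ (λ, α i)`. -/
def corootFn (A : Matrix ι ι ℤ) (i : ι) : (ι → ℤ) →ₗ[ℤ] ℤ where
  toFun x := ∑ j, x j * A j i
  map_add' x y := by simp [add_mul, Finset.sum_add_distrib]
  map_smul' c x := by simp [Finset.mul_sum, mul_assoc]

lemma corootFn_sroot (A : Matrix ι ι ℤ) (hA : IsGCM A) (i : ι) :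
    corootFn A i (sroot i) = 2 := by
  have h : ∀ j, (sroot i) j * A j i = if j = i then A j i else 0 := by
    intro j
    by_cases h : j = i <;> simp [sroot, Pi.single_apply, h]
  have : corootFn A i (sroot i) = ∑ j, (sroot i) j * A j i := rfl
  rw [this]
  simp [h, hA.2.1 i]

/-- The simple reflection `r i : λ ↦ λ - (λ, α i) α i` as a `ℤ`-linear automorphism
of the root lattice. -/
def srefl (A : Matrix ι ι ℤ) (hA : IsGCM A) (i : ι) : (ι → ℤ) ≃ₗ[ℤ] (ι → ℤ) :=
  Module.reflection (corootFn_sroot A hA i)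

/-- The Weyl group, the subgroup of automorphisms of the root lattice generated by the
simple reflections. -/
def weylGroup (A : Matrix ι ι ℤ) (hA : IsGCM A) : Subgroup ((ι → ℤ) ≃ₗ[ℤ] (ι → ℤ)) :=
  Subgroup.closure (Set.range (srefl A hA))

/-- The set of real roots: the orbit of the simple roots under the Weyl group. -/
def realRoots (A : Matrix ι ι ℤ) (hA : IsGCM A) : Set (ι → ℤ) :=
  {α | ∃ w ∈ weylGroup A hA, ∃ i, α = w (sroot i)}

/-- The set of positive real roots. -/
def posRealRoots (A : Matrix ι ι ℤ) (hA : IsGCM A) : Set (ι → ℤ) :=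
  realRoots A hA ∩ {α | ∀ i, 0 ≤ α i}

/-- The Dynkin diagram of a (symmetric) GCM: distinct `i`, `j` are adjacent
iff `A i j < 0`. -/
def dynkin (A : Matrix ι ι ℤ) : SimpleGraph ι where
  Adj i j := i ≠ j ∧ (A i j < 0 ∨ A j i < 0)
  symm := ⟨fun i j h => ⟨h.1.symm, h.2.symm⟩⟩
  loopless := ⟨fun i h => h.1 rfl⟩

/-- The fundamental set `K` of positive imaginary roots: non-zero, non-negative,
connected support, and `(α, α i) ≤ 0` for all `i`. -/
def fundamentalSet (A : Matrix ι ι ℤ) : Set (ι → ℤ) :=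
  {α | (∀ i, 0 ≤ α i) ∧ α ≠ 0 ∧
    ((dynkin A).induce {i | α i ≠ 0}).Connected ∧
    ∀ i, bform A α (sroot i) ≤ 0}

/-- The set of positive imaginary roots: the orbit of the fundamental set under the
Weyl group. -/
def posImRoots (A : Matrix ι ι ℤ) (hA : IsGCM A) : Set (ι → ℤ) :=
  {β | ∃ w ∈ weylGroup A hA, ∃ α ∈ fundamentalSet A, β = w α}

/-- The set of all roots `Δ = Δ^re ∪ Δ^im`. -/
def allRoots (A : Matrix ι ι ℤ) (hA : IsGCM A) : Set (ι → ℤ) :=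
  realRoots A hA ∪ (posImRoots A hA ∪ {α | -α ∈ posImRoots A hA})

/-- The canonical embedding of the root lattice into `V*_ℝ = L ⊗ ℝ = ι → ℝ`. -/
def castR (α : ι → ℤ) : ι → ℝ := fun i => (α i : ℝ)

/-- The imaginary cone: the closure of the convex hull of `Δ^im_+ ∪ {0}` in `V*_ℝ`. -/
def imCone (A : Matrix ι ι ℤ) (hA : IsGCM A) : Set (ι → ℝ) :=
  closure (convexHull ℝ (insert 0 (castR '' posImRoots A hA)))

/-- The pairing of `Z ∈ V = Hom_ℤ(L, ℂ)` (recorded by its values `Z i = Z(α i)`)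
with an element of `V*_ℝ`, via the `ℝ`-linear extension of `Z`. -/
def pairC (Z : ι → ℂ) (l : ι → ℝ) : ℂ := ∑ i, Z i * (l i : ℂ)

/-- The pairing of `Z ∈ V = Hom_ℤ(L, ℂ)` with an element of the root lattice. -/
def pairCZ (Z : ι → ℂ) (α : ι → ℤ) : ℂ := ∑ i, Z i * (α i : ℂ)

/-- The pairing of `Z ∈ V_ℝ = Hom_ℤ(L, ℝ)` with an element of `V*_ℝ`. -/
def pairR (Z : ι → ℝ) (l : ι → ℝ) : ℝ := ∑ i, Z i * l i

/-- The set `X = V \ ∪_{λ ∈ I₀} H_λ`. -/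
def Xset (A : Matrix ι ι ℤ) (hA : IsGCM A) : Set (ι → ℂ) :=
  {Z | ∀ l ∈ imCone A hA \ {0}, pairC Z l ≠ 0}

/-- The regular subset `Xreg = X \ ∪_{α ∈ Δ^re_+} H_α`. -/
def Xreg (A : Matrix ι ι ℤ) (hA : IsGCM A) : Set (ι → ℂ) :=
  Xset A hA ∩ {Z | ∀ α ∈ posRealRoots A hA, pairCZ Z α ≠ 0}

/-- The sector `{r e^{iπφ} : r > 0, φ₁ ≤ φ ≤ φ₂}` in `ℂ`. -/
def sector (φ₁ φ₂ : ℝ) : Set ℂ :=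
  {z | ∃ r : ℝ, 0 < r ∧ ∃ φ : ℝ, φ₁ ≤ φ ∧ φ ≤ φ₂ ∧
    z = (r : ℂ) * Complex.exp (Real.pi * φ * Complex.I)}

/-- The contragredient action of a lattice automorphism `w` on `V = Hom_ℤ(L, ℂ)`:
`(w·Z)(α i) = Z(w⁻¹ α i)`. -/
def actC (w : (ι → ℤ) ≃ₗ[ℤ] (ι → ℤ)) (Z : ι → ℂ) : ι → ℂ :=
  fun i => ∑ j, Z j * ((w.symm (sroot i)) j : ℂ)

/-- The contragredient action of a lattice automorphism `w` on `V_ℝ = Hom_ℤ(L, ℝ)`: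
`(w·Z)(α i) = Z(w⁻¹ α i)`. -/
def actR (w : (ι → ℤ) ≃ₗ[ℤ] (ι → ℤ)) (Z : ι → ℝ) : ι → ℝ :=
  fun i => ∑ j, Z j * ((w.symm (sroot i)) j : ℝ)

/-- The `ℝ`-linear extension of a lattice automorphism `w` to `V*_ℝ = L ⊗ ℝ`. -/
def extR (w : (ι → ℤ) ≃ₗ[ℤ] (ι → ℤ)) (l : ι → ℝ) : ι → ℝ :=
  fun i => ∑ j, ((w (sroot j)) i : ℝ) * l j

/-- Finite type for a GCM (Kac's condition (Fin)). -/
def IsFiniteType (A : Matrix ι ι ℤ) : Prop :=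
  A.det ≠ 0 ∧
  (∃ u : ι → ℝ, (∀ i, 0 < u i) ∧ ∀ i, 0 < (A.map (Int.cast : ℤ → ℝ)).mulVec u i) ∧
  ∀ u : ι → ℝ, (∀ i, 0 ≤ (A.map (Int.cast : ℤ → ℝ)).mulVec u i) →
    (∀ i, 0 < u i) ∨ u = 0

/-- The (open) Weyl chamber `C_ℝ` in `V_ℝ`. -/
def weylChamber : Set (ι → ℝ) := {Z | ∀ i, 0 < Z i}

/-- The closed Weyl chamber in `V_ℝ`. -/
def weylChamberCl : Set (ι → ℝ) := {Z | ∀ i, 0 ≤ Z i}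

/-- The Tits cone `T_ℝ = ∪_{w ∈ W} w(C̄_ℝ)`. -/
def titsCone (A : Matrix ι ι ℤ) (hA : IsGCM A) : Set (ι → ℝ) :=
  ⋃ w ∈ weylGroup A hA, actR w '' (weylChamberCl (ι := ι))

/-- The regular part of the Tits cone `T_{ℝ,reg} = ∪_{w ∈ W} w(C_ℝ)`. -/
def titsConeReg (A : Matrix ι ι ℤ) (hA : IsGCM A) : Set (ι → ℝ) :=
  ⋃ w ∈ weylGroup A hA, actR w '' (weylChamber (ι := ι))

/-- The normalized regular subset `Xreg^N = {Z ∈ Xreg : φ^I(Z) = 1/2}`: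
the image `Z(I₀)` is a sector `{r e^{iπφ} : r > 0, φ₁ ≤ φ ≤ φ₂}` with
`φ₂ - φ₁ < 1` and midpoint `(φ₁ + φ₂)/2 = 1/2`. -/
def XregN (A : Matrix ι ι ℤ) (hA : IsGCM A) : Set (ι → ℂ) :=
  {Z | Z ∈ Xreg A hA ∧ ∃ φ₁ φ₂ : ℝ, φ₁ ≤ φ₂ ∧ φ₂ - φ₁ < 1 ∧ φ₁ + φ₂ = 1 ∧
    pairC Z '' (imCone A hA \ {0}) = sector φ₁ φ₂}

/-- The semi-closed upper half-plane `H = ℍ ∪ ℝ_{<0}`. -/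
def semiClosedH : Set ℂ := {z | 0 < z.im} ∪ {z | z.im = 0 ∧ z.re < 0}

/-- The normalized complexified Weyl chamber
`C^N = {Z ∈ Xreg^N : Z(α i) ∈ H for all i}`. -/
def CN (A : Matrix ι ι ℤ) (hA : IsGCM A) : Set (ι → ℂ) :=
  {Z | Z ∈ XregN A hA ∧ ∀ i, Z i ∈ semiClosedH}

/-- The regular subset of the complexified Tits cone:
`T_reg = {Z ∈ Xreg : Z(I₀) ⊆ ℍ}`. -/
def Treg (A : Matrix ι ι ℤ) (hA : IsGCM A) : Set (ι → ℂ) :=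
  {Z | Z ∈ Xreg A hA ∧ ∀ l ∈ imCone A hA \ {0}, 0 < (pairC Z l).im}

open Classical in
/-- The phase `φ^I(Z)` of the imaginary cone with respect to `Z`, normalized by its
representative with `0 < φ₁`, `φ₂ < 1` (which exists and is unique when `Z(I₀) ⊆ ℍ`). -/
def phaseI (A : Matrix ι ι ℤ) (hA : IsGCM A) (Z : ι → ℂ) : ℝ :=
  if h : ∃ p : ℝ × ℝ, p.1 ≤ p.2 ∧ p.2 - p.1 < 1 ∧ 0 < p.1 ∧ p.2 < 1 ∧
      pairC Z '' (imCone A hA \ {0}) = sector p.1 p.2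
  then (h.choose.1 + h.choose.2) / 2 else 0

/-- The retraction `h_t(Z) = e^{iπt(1/2 - φ^I(Z))} · Z`. -/
def hRetract (A : Matrix ι ι ℤ) (hA : IsGCM A) (t : ℝ) (Z : ι → ℂ) : ι → ℂ :=
  Complex.exp (Real.pi * t * (1 / 2 - phaseI A hA Z) * Complex.I) • Z

/-- The wall `W_{i,+}`. -/
def wallPlus (A : Matrix ι ι ℤ) (hA : IsGCM A) (i : ι) : Set (ι → ℂ) :=
  {Z | Z ∈ XregN A hA ∧ ((Z i).im = 0 ∧ 0 < (Z i).re) ∧ ∀ j, j ≠ i → 0 < (Z j).im}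

/-- The wall `W_{i,-}`. -/
def wallMinus (A : Matrix ι ι ℤ) (hA : IsGCM A) (i : ι) : Set (ι → ℂ) :=
  {Z | Z ∈ XregN A hA ∧ ((Z i).im = 0 ∧ (Z i).re < 0) ∧ ∀ j, j ≠ i → 0 < (Z j).im}

/-- The defining relations of the Artin group attached to a symmetric GCM:
`σ i σ j = σ j σ i` if `a i j = 0` and `σ i σ j σ i = σ j σ i σ j` if `a i j = -1`. -/
def artinRels (A : Matrix ι ι ℤ) : Set (FreeGroup ι) :=
  {r | ∃ i j : ι,
    (A i j = 0 ∧ r = FreeGroup.of i * FreeGroup.of j *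
      (FreeGroup.of j * FreeGroup.of i)⁻¹) ∨
    (A i j = -1 ∧ r = FreeGroup.of i * FreeGroup.of j * FreeGroup.of i *
      (FreeGroup.of j * FreeGroup.of i * FreeGroup.of j)⁻¹)}

/-- The Artin group attached to a symmetric GCM. -/
def ArtinGroup (A : Matrix ι ι ℤ) := PresentedGroup (artinRels A)

instance (A : Matrix ι ι ℤ) : Group (ArtinGroup A) :=
  inferInstanceAs (Group (PresentedGroup (artinRels A)))

lemma IsGCM.submatrix {κ : Type*} [Fintype κ] [DecidableEq κ] {A : Matrix ι ι ℤ}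
    (hA : IsGCM A) (f : κ → ι) (hf : Function.Injective f) :
    IsGCM (A.submatrix f f) :=
  ⟨hA.1.submatrix f, fun i => hA.2.1 (f i),
    fun i j hij => hA.2.2 _ _ fun h => hij (hf h)⟩

/-!
A GCM of finite type is positive definite: for `u > 0` with `A u > 0` one has
`∑ i, (A u)_i / u_i * x_i ^ 2 ≤ (x, x)`. Hence there are finitely many vectors of norm `2`, so `W`
is finite, and every real root is either nonnegative or nonpositive. Minimising a suitable linear
functional over `W` gives a `v ∈ W` sending every simple root to a negative root, and the exchange
condition shows that only the identity sends every simple root to a positive root, so such a `v`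
is unique. Writing `Z = w₀ · Y` with `Y ∈ C_ℝ`, the sign of `(w · Z)(α i) = Y((w w₀)⁻¹ α i)` is the
sign of the root `(w w₀)⁻¹ α i`; so `w · Z` is in `-C_ℝ` exactly when `(w w₀)⁻¹ = v`.
-/

set_option linter.unusedSectionVars false

open Matrix

section BilinearForm

variable {A : Matrix ι ι ℤ}

lemma bform_eq_dotProduct (A : Matrix ι ι ℤ) (x y : ι → ℤ) : bform A x y = x ⬝ᵥ A *ᵥ y := by
  simp only [bform, dotProduct, mulVec, Finset.mul_sum, mul_assoc]

lemma bform_comm (hA : A.IsSymm) (x y : ι → ℤ) : bform A x y = bform A y x := by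
  rw [bform_eq_dotProduct, bform_eq_dotProduct, dotProduct_mulVec, dotProduct_comm,
    ← mulVec_transpose, hA.eq]

lemma bform_neg_neg (x y : ι → ℤ) : bform A (-x) (-y) = bform A x y := by
  simp [bform_eq_dotProduct, mulVec_neg]

lemma bform_sroot_right (x : ι → ℤ) (i : ι) : bform A x (sroot i) = corootFn A i x := by
  simp only [bform_eq_dotProduct, sroot, mulVec_single_one, corootFn, LinearMap.coe_mk,
    AddHom.coe_mk, dotProduct, col_apply]

lemma bform_sroot_sroot (i j : ι) : bform A (sroot i) (sroot j) = A i j := by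
  simp [bform_eq_dotProduct, sroot]

lemma bform_sub_smul_sroot (x y : ι → ℤ) (a b : ℤ) (i : ι) :
    bform A (x - a • sroot i) (y - b • sroot i) =
      bform A x y - b * bform A x (sroot i) - a * bform A (sroot i) y + a * b * A i i := by
  simp only [bform_eq_dotProduct, sub_dotProduct, dotProduct_sub, mulVec_sub, mulVec_smul,
    smul_dotProduct, dotProduct_smul, smul_eq_mul]
  simp only [← bform_eq_dotProduct, bform_sroot_sroot]
  ring

lemma bform_self_pos (hPD : A.PosDef) {β : ι → ℤ} (hβ : β ≠ 0) : 0 < bform A β β := by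
  simpa [bform_eq_dotProduct] using hPD.dotProduct_mulVec_pos hβ

lemma pos_of_bform_sroot_pos (hA : IsGCM A) {β : ι → ℤ} (hβ : 0 ≤ β) {i : ι}
    (h : 0 < bform A β (sroot i)) : 0 < β i := by
  refine (hβ i).lt_of_ne fun hβi => h.not_ge ?_
  rw [bform_sroot_right]
  refine Finset.sum_nonpos fun j _ => ?_
  rcases eq_or_ne j i with rfl | hji
  · simp [← hβi]
  · exact mul_nonpos_of_nonneg_of_nonpos (hβ j) (hA.2.2 j i hji)

end BilinearForm

lemma sum_smul_sroot (x : ι → ℤ) : ∑ k, x k • sroot k = x := by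
  simp [sroot, ← Pi.single_smul, Finset.univ_sum_single]

lemma sroot_nonneg (i : ι) : 0 ≤ sroot i := Pi.single_nonneg.2 zero_le_one

lemma sroot_ne_zero (i : ι) : sroot i ≠ 0 := Pi.single_ne_zero_iff.2 one_ne_zero

section WeylGroup

variable {A : Matrix ι ι ℤ} (hA : IsGCM A)

lemma srefl_apply (i : ι) (x : ι → ℤ) :
    srefl A hA i x = x - bform A x (sroot i) • sroot i := by
  rw [bform_sroot_right]
  exact Module.reflection_apply _ _

lemma srefl_sroot_self (i : ι) : srefl A hA i (sroot i) = -sroot i := by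
  rw [srefl_apply, bform_sroot_sroot, hA.2.1 i]
  module

lemma bform_srefl (i : ι) (x y : ι → ℤ) :
    bform A (srefl A hA i x) (srefl A hA i y) = bform A x y := by
  rw [srefl_apply, srefl_apply, bform_sub_smul_sroot, hA.2.1 i, bform_comm hA.1 (sroot i) y]
  ring

lemma srefl_inv (i : ι) : (srefl A hA i)⁻¹ = srefl A hA i := Module.reflection_inv _

lemma srefl_mul_self (i : ι) : srefl A hA i * srefl A hA i = 1 :=
  mul_eq_one_iff_eq_inv.2 (srefl_inv hA i).symm

lemma srefl_mem (i : ι) : srefl A hA i ∈ weylGroup A hA :=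
  Subgroup.subset_closure ⟨i, rfl⟩

def wordProd (l : List ι) : (ι → ℤ) ≃ₗ[ℤ] (ι → ℤ) := (l.map (srefl A hA)).prod

lemma wordProd_cons (i : ι) (l : List ι) :
    wordProd hA (i :: l) = srefl A hA i * wordProd hA l := by
  simp [wordProd]

lemma wordProd_concat (l : List ι) (i : ι) :
    wordProd hA (l.concat i) = wordProd hA l * srefl A hA i := by
  simp [wordProd]

lemma wordProd_mem (l : List ι) : wordProd hA l ∈ weylGroup A hA :=
  Subgroup.list_prod_mem _ (by simpa using fun i _ => srefl_mem hA i)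

lemma exists_wordProd_eq {w : (ι → ℤ) ≃ₗ[ℤ] (ι → ℤ)} (hw : w ∈ weylGroup A hA) :
    ∃ l, wordProd hA l = w := by
  induction hw using Subgroup.closure_induction_left with
  | one => exact ⟨[], rfl⟩
  | mul_left _ hx _ _ ih =>
    obtain ⟨i, rfl⟩ := hx
    obtain ⟨l, rfl⟩ := ih
    exact ⟨i :: l, wordProd_cons hA i l⟩
  | inv_mul_cancel _ hx _ _ ih =>
    obtain ⟨i, rfl⟩ := hx
    obtain ⟨l, rfl⟩ := ih
    exact ⟨i :: l, by rw [srefl_inv, wordProd_cons]⟩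

lemma bform_weyl {w : (ι → ℤ) ≃ₗ[ℤ] (ι → ℤ)} (hw : w ∈ weylGroup A hA) (x y : ι → ℤ) :
    bform A (w x) (w y) = bform A x y := by
  obtain ⟨l, rfl⟩ := exists_wordProd_eq hA hw
  clear hw
  induction l with
  | nil => rfl
  | cons i l ih => simp only [wordProd_cons, LinearEquiv.mul_apply, bform_srefl, ih]

lemma mul_srefl_eq_srefl_mul {w : (ι → ℤ) ≃ₗ[ℤ] (ι → ℤ)} (hw : w ∈ weylGroup A hA) {i k : ι}
    (h : w (sroot k) = sroot i) : w * srefl A hA k = srefl A hA i * w := by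
  ext x : 1
  simp only [LinearEquiv.mul_apply, srefl_apply, map_sub, map_smul, h]
  rw [← h, bform_weyl hA hw]

lemma bform_self_of_mem_realRoots {β : ι → ℤ} (hβ : β ∈ realRoots A hA) : bform A β β = 2 := by
  obtain ⟨w, hw, i, rfl⟩ := hβ
  rw [bform_weyl hA hw, bform_sroot_sroot, hA.2.1 i]

lemma ne_zero_of_bform_self_eq_two {β : ι → ℤ} (h : bform A β β = 2) : β ≠ 0 := by
  rintro rfl
  simp [bform] at h

lemma ne_zero_of_mem_realRoots {β : ι → ℤ} (hβ : β ∈ realRoots A hA) : β ≠ 0 :=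
  ne_zero_of_bform_self_eq_two (bform_self_of_mem_realRoots hA hβ)

end WeylGroup

/-- With `x i = u i * t i`, the quadratic form equals
`∑ i, (M u)_i / u_i * x_i ^ 2 - ½ ∑ i j, M i j * u i * u j * (t i - t j) ^ 2`,
and the off-diagonal terms of the second sum are nonpositive. -/
lemma sum_weighted_sq_le_dotProduct_mulVec {M : Matrix ι ι ℝ} (hM : M.IsSymm)
    (hoff : ∀ i j, i ≠ j → M i j ≤ 0) {u : ι → ℝ} (hu : ∀ i, 0 < u i) (x : ι → ℝ) :
    ∑ i, (M *ᵥ u) i / u i * x i ^ 2 ≤ x ⬝ᵥ M *ᵥ x := by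
  set T : ι → ι → ℝ := fun i j => M i j * (u j / u i * x i ^ 2)
  have hterm : ∀ i j, T i j + T j i ≤ 2 * (x i * (M i j * x j)) := by
    intro i j
    rcases eq_or_ne i j with rfl | hij
    · simp only [T, div_self (hu i).ne', one_mul]
      linarith
    · have hsq : 0 ≤ u j / u i * x i ^ 2 + u i / u j * x j ^ 2 - 2 * (x i * x j) := by
        have hui := (hu i).ne'
        have huj := (hu j).ne'
        have : u j / u i * x i ^ 2 + u i / u j * x j ^ 2 - 2 * (x i * x j) =
            (u j * x i - u i * x j) ^ 2 / (u i * u j) := by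
          field_simp
          ring
        rw [this]
        exact div_nonneg (sq_nonneg _) (mul_pos (hu i) (hu j)).le
      simp only [T, hM.apply i j]
      nlinarith [mul_nonpos_of_nonpos_of_nonneg (hoff i j hij) hsq]
  have hsum : ∑ i, (M *ᵥ u) i / u i * x i ^ 2 = ∑ i, ∑ j, T i j := by
    simp only [T, mulVec, dotProduct, Finset.sum_div, Finset.sum_mul]
    refine Finset.sum_congr rfl fun i _ => Finset.sum_congr rfl fun j _ => ?_
    ring
  calc ∑ i, (M *ᵥ u) i / u i * x i ^ 2
      = (∑ i, ∑ j, (T i j + T j i)) / 2 := by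
        have hswap : ∑ i, ∑ j, T j i = ∑ i, ∑ j, T i j := Finset.sum_comm
        rw [hsum]
        simp only [Finset.sum_add_distrib, hswap]
        ring
    _ ≤ (∑ i, ∑ j, 2 * (x i * (M i j * x j))) / 2 := by
        gcongr with i _ j _
        exact hterm i j
    _ = (2 * ∑ i, ∑ j, x i * (M i j * x j)) / 2 := by simp only [Finset.mul_sum]
    _ = x ⬝ᵥ M *ᵥ x := by
        rw [mul_div_cancel_left₀ _ two_ne_zero]
        simp only [dotProduct, mulVec, Finset.mul_sum]

section FiniteType

variable {A : Matrix ι ι ℤ} {u : ι → ℝ}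

lemma cast_bform_self (β : ι → ℤ) :
    (bform A β β : ℝ) = castR β ⬝ᵥ A.map (Int.cast : ℤ → ℝ) *ᵥ castR β := by
  simp [bform_eq_dotProduct, dotProduct, mulVec, castR]

lemma sum_weighted_sq_le_bform (hA : IsGCM A) (hu : ∀ i, 0 < u i) (β : ι → ℤ) :
    ∑ i, (A.map (Int.cast : ℤ → ℝ) *ᵥ u) i / u i * (β i : ℝ) ^ 2 ≤ bform A β β := by
  rw [cast_bform_self]
  exact sum_weighted_sq_le_dotProduct_mulVec (hA.1.map _)
    (fun i j hij => by simpa using hA.2.2 i j hij) hu (castR β)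

lemma posDef_of_pos_mulVec (hA : IsGCM A) (hu : ∀ i, 0 < u i)
    (hAu : ∀ i, 0 < (A.map (Int.cast : ℤ → ℝ) *ᵥ u) i) : A.PosDef := by
  refine posDef_iff_dotProduct_mulVec.2 ⟨isHermitian_iff_isSymm.2 hA.1, fun β hβ => ?_⟩
  obtain ⟨i, hi⟩ := Function.ne_iff.1 hβ
  have hpos : (0 : ℝ) < bform A β β := by
    refine lt_of_lt_of_le (Finset.sum_pos' (fun j _ => ?_) ⟨i, Finset.mem_univ i, ?_⟩)
      (sum_weighted_sq_le_bform hA hu β)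
    · exact mul_nonneg (div_pos (hAu j) (hu j)).le (sq_nonneg _)
    · have : (β i : ℝ) ≠ 0 := by exact_mod_cast hi
      exact mul_pos (div_pos (hAu i) (hu i)) (by positivity)
  rw [star_trivial, ← bform_eq_dotProduct]
  exact_mod_cast hpos

lemma finite_setOf_mul_sq_le {c : ℝ} (hc : 0 < c) (K : ℝ) : {n : ℤ | c * n ^ 2 ≤ K}.Finite := by
  refine (Set.finite_Icc (-⌈K / c⌉) ⌈K / c⌉).subset fun n (hn : c * n ^ 2 ≤ K) => ?_
  have habs : |(n : ℝ)| ≤ (n : ℝ) ^ 2 := by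
    rw [← Int.cast_abs, ← Int.natCast_natAbs]
    exact_mod_cast Int.natAbs_le_self_sq n
  have h1 : |(n : ℝ)| ≤ K / c := by
    rw [le_div_iff₀ hc]
    nlinarith
  have : |n| ≤ ⌈K / c⌉ := by exact_mod_cast h1.trans (Int.le_ceil _)
  exact abs_le.1 this

lemma finite_setOf_bform_self_eq_two (hA : IsGCM A) (hu : ∀ i, 0 < u i)
    (hAu : ∀ i, 0 < (A.map (Int.cast : ℤ → ℝ) *ᵥ u) i) : {β : ι → ℤ | bform A β β = 2}.Finite := by
  have hc : ∀ i, 0 < (A.map (Int.cast : ℤ → ℝ) *ᵥ u) i / u i := fun i => div_pos (hAu i) (hu i)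
  refine (Set.Finite.pi fun i => finite_setOf_mul_sq_le (hc i) 2).subset
    fun β (hβ : bform A β β = 2) => Set.mem_univ_pi.2 fun i => ?_
  calc _ ≤ ∑ j, (A.map (Int.cast : ℤ → ℝ) *ᵥ u) j / u j * (β j : ℝ) ^ 2 :=
        Finset.single_le_sum (fun j _ => mul_nonneg (hc j).le (sq_nonneg _)) (Finset.mem_univ i)
    _ ≤ bform A β β := sum_weighted_sq_le_bform hA hu β
    _ = 2 := by simp [hβ]

end FiniteType

lemma weylGroup_finite {A : Matrix ι ι ℤ} (hA : IsGCM A)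
    (hR : {β : ι → ℤ | bform A β β = 2}.Finite) :
    (weylGroup A hA : Set ((ι → ℤ) ≃ₗ[ℤ] (ι → ℤ))).Finite := by
  refine Set.Finite.of_finite_image (f := fun w i => w (sroot i))
    ((Set.Finite.pi fun _ => hR).subset ?_) ?_
  · rintro _ ⟨w, hw, rfl⟩
    exact Set.mem_univ_pi.2 fun i => bform_self_of_mem_realRoots hA ⟨w, hw, i, rfl⟩
  · intro w₁ _ w₂ _ h
    exact (Pi.basisFun ℤ ι).ext' fun i => by simpa [sroot] using congrFun h i

section PositiveDefinite

variable {A : Matrix ι ι ℤ} (hA : IsGCM A)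

/-- For a nonnegative `β` of norm `2`, with `b = (β, α i)`: if `b ≤ 1` then `r i β = β - b α i`
stays nonnegative, and if `b ≥ 2` then `β - α i` has norm `4 - 2b ≤ 0`, so `β = α i`. -/
lemma srefl_nonneg_or_eq_sroot (hPD : A.PosDef) {β : ι → ℤ}
    (h2 : bform A β β = 2) (hβ : 0 ≤ β) (i : ι) :
    0 ≤ srefl A hA i β ∨ β = sroot i := by
  set b := bform A β (sroot i) with hb
  rcases le_or_gt 2 b with hb2 | hb1
  · right
    by_contra hne
    have hnorm := bform_self_pos hPD (β := β - (1 : ℤ) • sroot i)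
      (by simpa [sub_eq_zero] using hne)
    rw [bform_sub_smul_sroot, bform_comm hA.1 (sroot i), h2, hA.2.1 i, ← hb] at hnorm
    linarith
  · left
    have hbi : b ≤ β i := by
      rcases le_or_gt b 0 with hb0 | hb0
      · exact hb0.trans (hβ i)
      · have := pos_of_bform_sroot_pos hA hβ hb0
        omega
    intro j
    rw [srefl_apply, ← hb]
    rcases eq_or_ne j i with rfl | hji
    · simpa [sroot] using hbi
    · simpa [sroot, hji] using hβ j

lemma eq_sroot_of_srefl_nonpos (hPD : A.PosDef) {β : ι → ℤ}
    (h2 : bform A β β = 2) (hβ : 0 ≤ β) {i : ι}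
    (hr : srefl A hA i β ≤ 0) : β = sroot i := by
  refine (srefl_nonneg_or_eq_sroot hA hPD h2 hβ i).resolve_left fun hr' => ?_
  have hzero : srefl A hA i β = srefl A hA i 0 := by rw [map_zero]; exact le_antisymm hr hr'
  exact ne_zero_of_bform_self_eq_two h2 ((srefl A hA i).injective hzero)

lemma srefl_nonneg_or_nonpos (hPD : A.PosDef) {β : ι → ℤ}
    (h2 : bform A β β = 2) (hβ : 0 ≤ β ∨ β ≤ 0) (i : ι) :
    0 ≤ srefl A hA i β ∨ srefl A hA i β ≤ 0 := by
  rcases hβ with hβ | hβ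
  · rcases srefl_nonneg_or_eq_sroot hA hPD h2 hβ i with h | rfl
    · exact Or.inl h
    · exact Or.inr (by simpa [srefl_sroot_self hA] using sroot_nonneg i)
  · rw [← neg_nonneg] at hβ
    rw [← bform_neg_neg] at h2
    rcases srefl_nonneg_or_eq_sroot hA hPD h2 hβ i with h | h
    · exact Or.inr (by simpa using h)
    · exact Or.inl (by simpa [neg_eq_iff_eq_neg.1 h, srefl_sroot_self hA] using sroot_nonneg i)

lemma nonneg_or_nonpos_of_mem_realRoots (hPD : A.PosDef)
    {β : ι → ℤ} (hβ : β ∈ realRoots A hA) :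
    0 ≤ β ∨ β ≤ 0 := by
  obtain ⟨w, hw, i, rfl⟩ := hβ
  obtain ⟨l, rfl⟩ := exists_wordProd_eq hA hw
  induction l with
  | nil => exact Or.inl (sroot_nonneg i)
  | cons k l ih =>
    have h2 := bform_self_of_mem_realRoots hA ⟨_, wordProd_mem hA l, i, rfl⟩
    exact srefl_nonneg_or_nonpos hA hPD h2 (ih (wordProd_mem hA l)) k

/-- The exchange condition. -/
lemma exists_shorter_word_of_sroot_nonpos (hPD : A.PosDef)
    (k : ι) (l : List ι) (h : wordProd hA l (sroot k) ≤ 0) :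
    ∃ l' : List ι, l'.length + 1 = l.length ∧ wordProd hA l' = wordProd hA l * srefl A hA k := by
  induction l with
  | nil => exact absurd (le_antisymm h (sroot_nonneg k)) (sroot_ne_zero k)
  | cons i l ih =>
    rw [wordProd_cons, LinearEquiv.mul_apply] at h
    have hγ : wordProd hA l (sroot k) ∈ realRoots A hA := ⟨_, wordProd_mem hA l, k, rfl⟩
    rcases nonneg_or_nonpos_of_mem_realRoots hA hPD hγ with hγ_nonneg | hγ_nonpos
    · have hγi :=
        eq_sroot_of_srefl_nonpos hA hPD (bform_self_of_mem_realRoots hA hγ) hγ_nonneg h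
      refine ⟨l, rfl, ?_⟩
      rw [wordProd_cons, mul_assoc, mul_srefl_eq_srefl_mul hA (wordProd_mem hA l) hγi,
        ← mul_assoc, srefl_mul_self, one_mul]
    · obtain ⟨l', hlen, hl'⟩ := ih hγ_nonpos
      exact ⟨i :: l', by simp [hlen], by rw [wordProd_cons, wordProd_cons, hl', mul_assoc]⟩

/-- If `k` is the last letter of a word for `g`, then `g α k ≥ 0` says that the rest of the word
sends `α k` to a negative root, and the exchange condition shortens the word. -/
lemma eq_one_of_sroot_nonneg (hPD : A.PosDef)
    {g : (ι → ℤ) ≃ₗ[ℤ] (ι → ℤ)} (hg : g ∈ weylGroup A hA) (h : ∀ k, 0 ≤ g (sroot k)) :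
    g = 1 := by
  obtain ⟨l, rfl⟩ := exists_wordProd_eq hA hg
  clear hg
  induction hn : l.length using Nat.strong_induction_on generalizing l with
  | _ n ih =>
  rcases l.eq_nil_or_concat with rfl | ⟨l', k, rfl⟩
  · rfl
  have hk := h k
  rw [wordProd_concat, LinearEquiv.mul_apply, srefl_sroot_self, map_neg, neg_nonneg] at hk
  obtain ⟨l'', hlen, hl''⟩ := exists_shorter_word_of_sroot_nonpos hA hPD k l' hk
  rw [wordProd_concat, ← hl''] at h ⊢
  exact ih _ (by simp [← hn, ← hlen]) l'' h rfl

lemma eq_of_sroot_nonpos (hPD : A.PosDef)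
    {v₁ v₂ : (ι → ℤ) ≃ₗ[ℤ] (ι → ℤ)} (hv₁ : v₁ ∈ weylGroup A hA) (hv₂ : v₂ ∈ weylGroup A hA)
    (h₁ : ∀ k, v₁ (sroot k) ≤ 0) (h₂ : ∀ k, v₂ (sroot k) ≤ 0) : v₁ = v₂ := by
  have hg : v₁⁻¹ * v₂ ∈ weylGroup A hA := mul_mem (inv_mem hv₁) hv₂
  refine inv_mul_eq_one.1 (eq_one_of_sroot_nonneg hA hPD hg fun k => ?_)
  have hγ : (v₁⁻¹ * v₂) (sroot k) ∈ realRoots A hA := ⟨_, hg, k, rfl⟩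
  refine (nonneg_or_nonpos_of_mem_realRoots hA hPD hγ).resolve_right fun hγ_nonpos => ?_
  have hv₂k : 0 ≤ v₂ (sroot k) := by
    have : v₂ (sroot k) = v₁ ((v₁⁻¹ * v₂) (sroot k)) := by simp
    rw [this, ← sum_smul_sroot ((v₁⁻¹ * v₂) (sroot k)), map_sum]
    exact Finset.sum_nonneg fun j _ => by
      rw [map_zsmul]
      exact smul_nonneg_of_nonpos_of_nonpos (hγ_nonpos j) (h₁ j)
  exact ne_zero_of_mem_realRoots hA ⟨v₂, hv₂, k, rfl⟩ (le_antisymm (h₂ k) hv₂k)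

end PositiveDefinite

lemma pairR_castR_neg (Y : ι → ℝ) (β : ι → ℤ) : pairR Y (castR (-β)) = -pairR Y (castR β) := by
  simp [pairR, castR]

lemma pairR_castR_sub_smul (Y : ι → ℝ) (x y : ι → ℤ) (c : ℤ) :
    pairR Y (castR (x - c • y)) = pairR Y (castR x) - c * pairR Y (castR y) := by
  simp only [pairR, castR, Pi.sub_apply, Pi.smul_apply, smul_eq_mul, Int.cast_sub, Int.cast_mul,
    Finset.mul_sum, ← Finset.sum_sub_distrib]
  exact Finset.sum_congr rfl fun _ _ => by ring

lemma pairR_castR_pos {Y : ι → ℝ} (hY : Y ∈ weylChamber) {β : ι → ℤ} (hβ : 0 ≤ β)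
    (hβ0 : β ≠ 0) : 0 < pairR Y (castR β) := by
  obtain ⟨i, hi⟩ := Function.ne_iff.1 hβ0
  refine Finset.sum_pos' (fun j _ => mul_nonneg (hY j).le (Int.cast_nonneg (hβ j)))
    ⟨i, Finset.mem_univ i, mul_pos (hY i) (Int.cast_pos.2 ((hβ i).lt_of_ne' hi))⟩

lemma pairR_castR_actR (w : (ι → ℤ) ≃ₗ[ℤ] (ι → ℤ)) (Z : ι → ℝ) (β : ι → ℤ) :
    pairR (actR w Z) (castR β) = pairR Z (castR (w.symm β)) := by
  conv_rhs => rw [← sum_smul_sroot β]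
  simp only [pairR, castR, actR, map_sum, map_zsmul, Finset.sum_apply, Pi.smul_apply,
    smul_eq_mul, Int.cast_sum, Int.cast_mul, Finset.mul_sum, Finset.sum_mul]
  rw [Finset.sum_comm]
  exact Finset.sum_congr rfl fun _ _ => Finset.sum_congr rfl fun _ _ => by ring

lemma actR_mul (w w' : (ι → ℤ) ≃ₗ[ℤ] (ι → ℤ)) (Z : ι → ℝ) :
    actR (w * w') Z = actR w (actR w' Z) := by
  funext i
  exact (pairR_castR_actR w' Z _).symm

section LongestElement

variable {A : Matrix ι ι ℤ} (hA : IsGCM A)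

lemma nonpos_of_pairR_castR_nonpos (hPD : A.PosDef)
    {Y : ι → ℝ} (hY : Y ∈ weylChamber) {β : ι → ℤ} (hβ : β ∈ realRoots A hA)
    (h : pairR Y (castR β) ≤ 0) : β ≤ 0 :=
  (nonneg_or_nonpos_of_mem_realRoots hA hPD hβ).resolve_left fun hβ' =>
    (pairR_castR_pos hY hβ' (ne_zero_of_mem_realRoots hA hβ)).not_ge h

lemma forall_actR_inv_neg_iff (hPD : A.PosDef)
    {v : (ι → ℤ) ≃ₗ[ℤ] (ι → ℤ)} (hv : v ∈ weylGroup A hA) {Y : ι → ℝ} (hY : Y ∈ weylChamber) :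
    (∀ i, actR v⁻¹ Y i < 0) ↔ ∀ i, v (sroot i) ≤ 0 := by
  refine forall_congr' fun i => ⟨fun h => ?_, fun h => ?_⟩
  · exact nonpos_of_pairR_castR_nonpos hA hPD hY ⟨v, hv, i, rfl⟩ h.le
  · have := pairR_castR_pos hY (neg_nonneg.2 h)
      (neg_ne_zero.2 (ne_zero_of_mem_realRoots hA ⟨v, hv, i, rfl⟩))
    rw [pairR_castR_neg] at this
    exact neg_pos.1 this

/-- The longest element: minimising `v ↦ ⟨u, v(∑ⱼ uⱼ αⱼ)⟩` over the finite group `W`, where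
`r k` lowers the value by `(A u)_k ⟨u, v α k⟩`, forces every `v α k` to be negative. -/
lemma exists_sroot_nonpos (hPD : A.PosDef)
    (hW : (weylGroup A hA : Set ((ι → ℤ) ≃ₗ[ℤ] (ι → ℤ))).Finite) {u : ι → ℝ}
    (hu : ∀ i, 0 < u i) (hAu : ∀ i, 0 < (A.map (Int.cast : ℤ → ℝ) *ᵥ u) i) :
    ∃ v ∈ weylGroup A hA, ∀ k, v (sroot k) ≤ 0 := by
  set f : ((ι → ℤ) ≃ₗ[ℤ] (ι → ℤ)) → ℝ := fun v => ∑ j, u j * pairR u (castR (v (sroot j)))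
  obtain ⟨v, hv, hmin⟩ := Set.exists_min_image _ f hW ⟨1, one_mem _⟩
  refine ⟨v, hv, fun k => nonpos_of_pairR_castR_nonpos hA hPD hu ⟨v, hv, k, rfl⟩ ?_⟩
  have hstep : f (v * srefl A hA k) =
      f v - (A.map (Int.cast : ℤ → ℝ) *ᵥ u) k * pairR u (castR (v (sroot k))) := by
    simp only [f, LinearEquiv.mul_apply, srefl_apply, bform_sroot_sroot, map_sub, map_zsmul,
      pairR_castR_sub_smul, mul_sub, Finset.sum_sub_distrib, mulVec, dotProduct,
      map_apply, Finset.sum_mul]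
    congr 1
    exact Finset.sum_congr rfl fun j _ => by rw [hA.1.apply]; ring
  have := hmin _ (mul_mem hv (srefl_mem hA k))
  nlinarith [hAu k]

end LongestElement

theorem finiteType_unique_weyl_to_negative_chamber_general (A : Matrix ι ι ℤ) (hA : IsGCM A)
    (hfin : IsFiniteType A)
    (Z : ι → ℝ) (hZ : Z ∈ titsConeReg A hA) :
    ∃! w : (ι → ℤ) ≃ₗ[ℤ] (ι → ℤ), w ∈ weylGroup A hA ∧ ∀ i, actR w Z i < 0 := by
  obtain ⟨u, hu, hAu⟩ := hfin.2.1
  have hPD := posDef_of_pos_mulVec hA hu hAu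
  obtain ⟨v, hv, hv_nonpos⟩ := exists_sroot_nonpos hA hPD
    (weylGroup_finite hA (finite_setOf_bform_self_eq_two hA hu hAu)) hu hAu
  simp only [titsConeReg, Set.mem_iUnion, Set.mem_image] at hZ
  obtain ⟨w₀, hw₀, Y, hY, rfl⟩ := hZ
  refine ⟨v⁻¹ * w₀⁻¹, ⟨mul_mem (inv_mem hv) (inv_mem hw₀), ?_⟩, ?_⟩
  · rw [← actR_mul, inv_mul_cancel_right]
    exact (forall_actR_inv_neg_iff hA hPD hv hY).2 hv_nonpos
  · rintro w ⟨hw, hw_neg⟩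
    replace hw_neg : ∀ i, actR (w * w₀)⁻¹⁻¹ Y i < 0 := by simpa only [inv_inv, actR_mul]
    have hw' := eq_of_sroot_nonpos hA hPD (inv_mem (mul_mem hw hw₀)) hv
      ((forall_actR_inv_neg_iff hA hPD (inv_mem (mul_mem hw hw₀)) hY).1 hw_neg) hv_nonpos
    rw [← hw', inv_inv, mul_inv_cancel_right]

/-- for an indecomposable GCM of finite type, every `Z` in the regular
Tits cone has a unique `w ∈ W` with `(w·Z)(α_i) < 0` for all `i`. -/
theorem finiteType_unique_weyl_to_negative_chamber (A : Matrix ι ι ℤ) (hA : IsGCM A)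
    (hconn : (dynkin A).Connected) (hfin : IsFiniteType A)
    (Z : ι → ℝ) (hZ : Z ∈ titsConeReg A hA) :
    ∃! w : (ι → ℤ) ≃ₗ[ℤ] (ι → ℤ), w ∈ weylGroup A hA ∧ ∀ i, actR w Z i < 0 :=
  finiteType_unique_weyl_to_negative_chamber_general A hA hfin Z hZ

end KacMoodyStab
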